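/- Let Φ : POPI_n(Y) → POPI_n(Z) be a semigroup isomorphism and let φ : Y → Z be the induced bijection (characterized by id_{y}Φ = id_{yφ}). Then for every α ∈ POPI_n(Y): (a) if y ∈ Y ∩ Dom(α) then yφ ∈ Dom(αΦ) and (yφ)(αΦ) = (yα)φ; (b) Fix(αΦ) = Fix(α)φ; (c) Im(αΦ) = Im(α)φ. -/

import Mathlib

open scoped Classical

namespace POPIpaper

/-- Partial transformations of `Ω_n = {1,…,n}`, modelled on `Fin n`. -/
abbrev PT (n : ℕ) := Fin n → Option (Fin n)

/-- Composition of partial transformations (apply `α` first, then `β`). -/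
def comp {n : ℕ} (α β : PT n) : PT n := fun x => (α x).bind β

/-- Domain of a partial transformation. -/
noncomputable def dom {n : ℕ} (α : PT n) : Finset (Fin n) :=
  Finset.univ.filter (fun x => (α x).isSome)

/-- Image of a partial transformation. -/
noncomputable def im {n : ℕ} (α : PT n) : Finset (Fin n) :=
  Finset.univ.filter (fun y => ∃ x, α x = some y)

/-- rank(α) = |Im(α)|. -/
noncomputable def rank {n : ℕ} (α : PT n) : ℕ := (im α).card

/-- Injectivity of a partial transformation. -/
def Inj {n : ℕ} (α : PT n) : Prop :=
  ∀ x y z : Fin n, α x = some z → α y = some z → x = y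

/-- Orientation-preserving: the sequence of images, taken along the increasing
enumeration of the domain, is cyclic, i.e. some rotation of it is sorted. -/
def OP {n : ℕ} (α : PT n) : Prop :=
  ∃ k : ℕ, (((List.finRange n).filterMap α).rotate k).Pairwise (· ≤ ·)

/-- The semigroup `POPI_n(Y)` as a set of partial transformations:
injective, orientation-preserving, with image contained in `Y`. -/
def POPI (n : ℕ) (Y : Finset (Fin n)) : Set (PT n) :=
  {α | Inj α ∧ OP α ∧ ∀ x y : Fin n, α x = some y → y ∈ Y}

/-- Regularity of `α` as an element of the subsemigroup `S`. -/
def IsRegularIn {n : ℕ} (S : Set (PT n)) (α : PT n) : Prop :=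
  ∃ β ∈ S, comp (comp α β) α = α

/-- The partial identity on a subset `A`. -/
def idp {n : ℕ} (A : Finset (Fin n)) : PT n :=
  fun x => if x ∈ A then some x else none

/-- Fixed points of a partial transformation. -/
noncomputable def fix {n : ℕ} (α : PT n) : Finset (Fin n) :=
  Finset.univ.filter (fun x => α x = some x)

/-- Green's relation ℒ on the set `S`: `S¹α = S¹β`. -/
def LRel {n : ℕ} (S : Set (PT n)) (α β : PT n) : Prop :=
  (α = β ∨ ∃ γ ∈ S, comp γ β = α) ∧ (β = α ∨ ∃ γ ∈ S, comp γ α = β)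

/-- Green's relation ℛ on the set `S`: `αS¹ = βS¹`. -/
def RRel {n : ℕ} (S : Set (PT n)) (α β : PT n) : Prop :=
  (α = β ∨ ∃ γ ∈ S, comp β γ = α) ∧ (β = α ∨ ∃ γ ∈ S, comp α γ = β)

/-- Green's relation ℋ = ℒ ∩ ℛ. -/
def HRel {n : ℕ} (S : Set (PT n)) (α β : PT n) : Prop :=
  LRel S α β ∧ RRel S α β

/-- Green's relation 𝒟 = ℒ ∘ ℛ. -/
def DRel {n : ℕ} (S : Set (PT n)) (α β : PT n) : Prop :=
  ∃ γ ∈ S, LRel S α γ ∧ RRel S γ β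

/-- `Φ` is a semigroup isomorphism from the subsemigroup `S` onto `T`. -/
def IsIso {n : ℕ} (S T : Set (PT n)) (Φ : PT n → PT n) : Prop :=
  Set.BijOn Φ S T ∧ ∀ a ∈ S, ∀ b ∈ S, Φ (comp a b) = comp (Φ a) (Φ b)

/-- The product `β * l₁ * ⋯ * l_k` of a nonempty list of partial transformations. -/
def prodList {n : ℕ} (β : PT n) (l : List (PT n)) : PT n := l.foldl comp β

/-!
An isomorphism `Φ` preserves the empty map (the zero of both semigroups), so for `β ∈ POPI_n(Y)`
the condition `β ≠ ∅` is transported by `Φ`. Cutting `α` down to one point with partial identities,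
`z ∈ Im(α)` iff `α id_{z} ≠ ∅`, and `yα = z` iff `id_{y} α id_{z} ≠ ∅`. Since `Φ` maps
`id_{y}` to `id_{yφ}`, it maps these products to the corresponding ones for `αΦ`, which gives
`yα = z ↔ (yφ)(αΦ) = zφ` and `z ∈ Im(α) ↔ zφ ∈ Im(αΦ)`; (a), (b), (c) follow because `φ` maps
`Y` onto `Z`.
-/

section PartialTransformations

variable {n : ℕ}

lemma idp_apply_eq_some {A : Finset (Fin n)} {x w : Fin n} :
    idp A x = some w ↔ x ∈ A ∧ x = w := by
  unfold idp; split_ifs <;> simp_all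

lemma idp_empty_apply (x : Fin n) : idp (∅ : Finset (Fin n)) x = none := rfl

lemma idp_empty_comp (β : PT n) : comp (idp ∅) β = idp ∅ := rfl

lemma comp_idp_empty (β : PT n) : comp β (idp ∅) = idp ∅ := by
  funext x; cases h : β x <;> simp [comp, h, idp_empty_apply]

lemma eq_idp_empty_iff {β : PT n} : β = idp ∅ ↔ ∀ x w, β x ≠ some w := by
  simp only [funext_iff, idp_empty_apply, Option.eq_none_iff_forall_ne_some]

lemma comp_eq_some {α β : PT n} {x w : Fin n} :
    comp α β x = some w ↔ ∃ v, α x = some v ∧ β v = some w := by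
  simp [comp, Option.bind_eq_some_iff]

lemma mem_im {α : PT n} {w : Fin n} : w ∈ im α ↔ ∃ x, α x = some w := by
  simp [im]

lemma mem_fix {α : PT n} {x : Fin n} : x ∈ fix α ↔ α x = some x := by
  simp [fix]

lemma comp_idp_singleton_eq_empty_iff {α : PT n} {z : Fin n} :
    comp α (idp {z}) = idp ∅ ↔ z ∉ im α := by
  simp only [eq_idp_empty_iff, ne_eq, comp_eq_some, idp_apply_eq_some, Finset.mem_singleton,
    mem_im]
  grind

lemma mem_im_idp_singleton_comp {α : PT n} {y z : Fin n} :
    z ∈ im (comp (idp {y}) α) ↔ α y = some z := by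
  simp only [mem_im, comp_eq_some, idp_apply_eq_some, Finset.mem_singleton]
  grind

lemma OP_of_le {f : PT n}
    (h : ∀ x x' b b', x ≤ x' → f x = some b → f x' = some b' → b ≤ b') : OP f :=
  ⟨0, by
    rw [List.rotate_zero]
    exact (List.pairwise_le_finRange n).filterMap f
      fun x x' hx b hb b' hb' => h x x' b b' hx hb hb'⟩

lemma OP_of_image_subsingleton {f : PT n}
    (h : ∀ x x' b b', f x = some b → f x' = some b' → b = b') : OP f :=
  OP_of_le fun x x' b b' _ hb hb' => (h x x' b b' hb hb').le

variable {Y : Finset (Fin n)}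

lemma idp_mem_POPI {A : Finset (Fin n)} (hA : A ⊆ Y) : idp A ∈ POPI n Y := by
  refine ⟨fun x x' z hx hx' => ?_, OP_of_le fun x x' b b' hxx' hb hb' => ?_, fun x y hxy => ?_⟩
  · simp only [idp_apply_eq_some] at hx hx'
    rw [hx.2, hx'.2]
  · simp only [idp_apply_eq_some] at hb hb'
    rwa [← hb.2, ← hb'.2]
  · simp only [idp_apply_eq_some] at hxy
    exact hxy.2 ▸ hA hxy.1

lemma idp_singleton_comp_mem_POPI {α : PT n} (hα : α ∈ POPI n Y) (y : Fin n) :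
    comp (idp {y}) α ∈ POPI n Y := by
  have hdom : ∀ {x w}, comp (idp {y}) α x = some w → x = y ∧ α y = some w := by
    intro x w hx
    obtain ⟨v, hv, hvw⟩ := comp_eq_some.1 hx
    simp only [idp_apply_eq_some, Finset.mem_singleton] at hv
    exact ⟨hv.1, hv.1 ▸ hv.2 ▸ hvw⟩
  refine ⟨fun x x' z hx hx' => ?_, OP_of_image_subsingleton fun x x' b b' hb hb' => ?_,
    fun x w hx => hα.2.2 y w (hdom hx).2⟩
  · rw [(hdom hx).1, (hdom hx').1]
  · exact Option.some_injective _ ((hdom hb).2.symm.trans (hdom hb').2)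

lemma comp_idp_singleton_mem_POPI {α : PT n} (hα : α ∈ POPI n Y) {z : Fin n} (hz : z ∈ Y) :
    comp α (idp {z}) ∈ POPI n Y := by
  have hcod : ∀ {x w}, comp α (idp {z}) x = some w → α x = some w ∧ w = z := by
    intro x w hx
    obtain ⟨v, hv, hvw⟩ := comp_eq_some.1 hx
    simp only [idp_apply_eq_some, Finset.mem_singleton] at hvw
    exact ⟨hvw.2 ▸ hv, hvw.2 ▸ hvw.1⟩
  refine ⟨fun x x' w hx hx' => hα.1 x x' w (hcod hx).1 (hcod hx').1,
    OP_of_image_subsingleton fun x x' b b' hb hb' => (hcod hb).2.trans (hcod hb').2.symm,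
    fun x w hx => (hcod hx).2 ▸ hz⟩

end PartialTransformations

section Isomorphism

variable {n : ℕ} {Y Z : Finset (Fin n)} {Φ : PT n → PT n}

lemma IsIso.map_idp_empty (hΦ : IsIso (POPI n Y) (POPI n Z) Φ) : Φ (idp ∅) = idp ∅ := by
  obtain ⟨δ, hδ, hΦδ⟩ := hΦ.1.surjOn (idp_mem_POPI (Finset.empty_subset Z))
  calc Φ (idp ∅) = Φ (comp (idp ∅) δ) := by rw [idp_empty_comp]
    _ = comp (Φ (idp ∅)) (idp ∅) := by
      rw [hΦ.2 _ (idp_mem_POPI (Finset.empty_subset Y)) _ hδ, hΦδ]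
    _ = idp ∅ := comp_idp_empty _

lemma IsIso.map_eq_idp_empty_iff (hΦ : IsIso (POPI n Y) (POPI n Z) Φ) {β : PT n}
    (hβ : β ∈ POPI n Y) : Φ β = idp ∅ ↔ β = idp ∅ := by
  simpa only [hΦ.map_idp_empty] using
    hΦ.1.injOn.eq_iff hβ (idp_mem_POPI (Finset.empty_subset Y))

variable {φ : Fin n → Fin n}

lemma IsIso.mem_im_map_iff (hΦ : IsIso (POPI n Y) (POPI n Z) Φ)
    (hid : ∀ y ∈ Y, Φ (idp {y}) = idp {φ y}) {β : PT n} (hβ : β ∈ POPI n Y)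
    {z : Fin n} (hz : z ∈ Y) : φ z ∈ im (Φ β) ↔ z ∈ im β := by
  rw [← not_iff_not, ← comp_idp_singleton_eq_empty_iff, ← comp_idp_singleton_eq_empty_iff,
    ← hid z hz, ← hΦ.2 _ hβ _ (idp_mem_POPI (Finset.singleton_subset_iff.2 hz)),
    hΦ.map_eq_idp_empty_iff (comp_idp_singleton_mem_POPI hβ hz)]

lemma IsIso.map_apply_eq_some_iff (hΦ : IsIso (POPI n Y) (POPI n Z) Φ)
    (hid : ∀ y ∈ Y, Φ (idp {y}) = idp {φ y}) {α : PT n} (hα : α ∈ POPI n Y)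
    {y z : Fin n} (hy : y ∈ Y) (hz : z ∈ Y) : Φ α (φ y) = some (φ z) ↔ α y = some z := by
  rw [← mem_im_idp_singleton_comp, ← mem_im_idp_singleton_comp, ← hid y hy,
    ← hΦ.2 _ (idp_mem_POPI (Finset.singleton_subset_iff.2 hy)) _ hα]
  exact hΦ.mem_im_map_iff hid (idp_singleton_comp_mem_POPI hα y) hz

end Isomorphism

theorem iso_induced_properties_general {n : ℕ} (Y Z : Finset (Fin n))
    (Φ : PT n → PT n)
    (hΦ : IsIso (POPI n Y) (POPI n Z) Φ) (φ : Fin n → Fin n)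
    (hbij : Set.BijOn φ ↑Y ↑Z) (hid : ∀ y ∈ Y, Φ (idp {y}) = idp {φ y})
    (α : PT n) (hα : α ∈ POPI n Y) :
    (∀ y ∈ Y, ∀ z : Fin n, α y = some z → Φ α (φ y) = some (φ z)) ∧
    fix (Φ α) = (fix α).image φ ∧
    im (Φ α) = (im α).image φ := by
  have hΦα : Φ α ∈ POPI n Z := hΦ.1.mapsTo hα
  have hpreimage : ∀ {x w}, Φ α x = some w → ∃ z ∈ Y, φ z = w := fun hw =>
    hbij.surjOn (hΦα.2.2 _ _ hw)
  refine ⟨fun y hy z hz => (hΦ.map_apply_eq_some_iff hid hα hy (hα.2.2 y z hz)).2 hz, ?_, ?_⟩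
  · ext w
    rw [Finset.mem_image]
    constructor
    · intro hw
      rw [mem_fix] at hw
      obtain ⟨y, hy, rfl⟩ := hpreimage hw
      exact ⟨y, mem_fix.2 ((hΦ.map_apply_eq_some_iff hid hα hy hy).1 hw), rfl⟩
    · rintro ⟨y, hy, rfl⟩
      rw [mem_fix] at hy ⊢
      have hyY := hα.2.2 y y hy
      exact (hΦ.map_apply_eq_some_iff hid hα hyY hyY).2 hy
  · ext w
    rw [Finset.mem_image]
    constructor
    · intro hw
      obtain ⟨x, hx⟩ := mem_im.1 hw
      obtain ⟨z, hz, rfl⟩ := hpreimage hx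
      exact ⟨z, (hΦ.mem_im_map_iff hid hα hz).1 hw, rfl⟩
    · rintro ⟨z, hz, rfl⟩
      obtain ⟨x, hx⟩ := mem_im.1 hz
      exact (hΦ.mem_im_map_iff hid hα (hα.2.2 x z hx)).2 hz

/-- properties of the bijection `φ` induced by an isomorphism
`Φ : POPI_n(Y) → POPI_n(Z)`. -/
theorem iso_induced_properties {n : ℕ} (Y Z : Finset (Fin n))
    (hY : Y.Nonempty) (hZ : Z.Nonempty) (Φ : PT n → PT n)
    (hΦ : IsIso (POPI n Y) (POPI n Z) Φ) (φ : Fin n → Fin n)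
    (hbij : Set.BijOn φ ↑Y ↑Z) (hid : ∀ y ∈ Y, Φ (idp {y}) = idp {φ y})
    (α : PT n) (hα : α ∈ POPI n Y) :
    (∀ y ∈ Y, ∀ z : Fin n, α y = some z → Φ α (φ y) = some (φ z)) ∧
    fix (Φ α) = (fix α).image φ ∧
    im (Φ α) = (im α).image φ :=
  iso_induced_properties_general Y Z Φ hΦ φ hbij hid α hα

end POPIpaper
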